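/- Let A⁽¹⁾, …, A⁽ᵍ⁾ be measurements on ℂ^d, where A⁽ⁱ⁾ has n i outcomes and all of its effects are nonzero, and let ρ ∈ Matrix (Fin d) (Fin d) ℂ be positive definite with trace 1. Suppose Y is a g-outcome measurement on ℂ^{d²} (i.e., Y : Fin g → Matrix (Fin d × Fin d) (Fin d × Fin d) ℂ with each Y i positive semidefinite and ∑ i, Y i = 1) such that ∑ i, Re (Matrix.trace (F_ρ(A⁽ⁱ⁾) * Y i)) > min d (∏ i, n i). Then the measurements A⁽¹⁾, …, A⁽ᵍ⁾ are incompatible: there is no measurement C such that A⁽ⁱ⁾ ⪯ C for every i. -/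

import Mathlib

open Matrix
open scoped Kronecker ComplexOrder

noncomputable section

/-- A measurement (POVM): a finite family of positive semidefinite matrices summing to `1`. -/
def IsMeasurement {ι κ : Type*} [Fintype ι] [DecidableEq ι] [Fintype κ]
    (A : κ → Matrix ι ι ℂ) : Prop :=
  (∀ x, (A x).PosSemidef) ∧ ∑ x, A x = 1

/-- `A` is a post-processing of `B`: `A ⪯ B`. -/
def PostProc {ι : Type*} {n m : ℕ}
    (A : Fin n → Matrix ι ι ℂ) (B : Fin m → Matrix ι ι ℂ) : Prop :=
  ∃ μ : Fin n → Fin m → ℝ,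
    (∀ x y, 0 ≤ μ x y) ∧ (∀ y, ∑ x, μ x y = 1) ∧
    (∀ x, A x = ∑ y, (μ x y : ℂ) • B y)

/-- The outer product `|E⟩⟨F|` of the vectorizations of two matrices. -/
def outerProd {ι : Type*} (E F : Matrix ι ι ℂ) : Matrix (ι × ι) (ι × ι) ℂ :=
  Matrix.of fun p q => E p.1 p.2 * star (F q.1 q.2)

/-- The (un-normalized) Fisher information map of a measurement. -/
noncomputable def Fisher {ι κ : Type*} [Fintype ι] [Fintype κ]
    (A : κ → Matrix ι ι ℂ) : Matrix (ι × ι) (ι × ι) ℂ :=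
  ∑ x, (Matrix.trace (A x))⁻¹ • outerProd (A x) (A x)

/-- The square root of a positive semidefinite matrix, as defined in the older Mathlib
(removed upstream; spelled out here with its old meaning). -/
noncomputable def Matrix.PosSemidef.sqrt {𝕜 : Type*} [RCLike 𝕜] {n : Type*} [Fintype n]
    [DecidableEq n] {A : Matrix n n 𝕜} (hA : A.PosSemidef) : Matrix n n 𝕜 :=
  (hA.1.eigenvectorUnitary : Matrix n n 𝕜) * diagonal ((↑) ∘ (√·) ∘ hA.1.eigenvalues) *
    (star hA.1.eigenvectorUnitary : Matrix n n 𝕜)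

/-- The generalized Fisher information map of a measurement, relative to a
positive definite state `ρ` (with positive semidefinite square root `ρ^{1/2}`). -/
noncomputable def FisherRho {ι κ : Type*} [Fintype ι] [DecidableEq ι] [Fintype κ]
    {ρ : Matrix ι ι ℂ} (hρ : ρ.PosDef) (A : κ → Matrix ι ι ℂ) :
    Matrix (ι × ι) (ι × ι) ℂ :=
  ∑ x, (Matrix.trace (ρ * A x))⁻¹ •
    outerProd (hρ.posSemidef.sqrt * A x) (hρ.posSemidef.sqrt * A x)

/-- The height of a finite family of self-adjoint matrices: the infimum of the traces of
Hermitian matrices dominating every member in the Loewner order. -/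
noncomputable def height {ι κ : Type*} [Fintype ι] [Fintype κ]
    (X : κ → Matrix ι ι ℂ) : ℝ :=
  sInf { t : ℝ | ∃ H : Matrix ι ι ℂ, H.IsHermitian ∧
    (∀ i, (H - X i).PosSemidef) ∧ t = (Matrix.trace H).re }

/-!
If every `A i` were a post-processing of one measurement `C`, all of them would be marginals of a
single joint measurement `J` with `∏ i, n i` outcomes. The summand `(tr ρE)⁻¹ |√ρ E⟩⟨√ρ E|` of the
Fisher information map is subadditive in the effect `E` (Cauchy–Schwarz), so coarse-graining can
only decrease `F_ρ` in the Loewner order, and hence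
`∑ i, tr (F_ρ(A i) Y i) ≤ ∑ i, tr (F_ρ(J) Y i) = tr F_ρ(J)`. Each summand of `F_ρ(J)` has trace
`tr (ρE²) / tr (ρE)`, which is at most `1` because `E ≤ 1`, and at most `tr E` because
`E ≤ tr E • 1`; summing over the outcomes bounds `tr F_ρ(J)` by `∏ i, n i` and by `d`.
-/

open scoped MatrixOrder

namespace Finset

-- The summands with `g i = 0` vanish on both sides, as `x / 0 = 0`.
lemma sq_sum_div_le_sum_sq_div_of_nonneg {ι : Type*} (s : Finset ι) (f g : ι → ℝ)
    (hg : ∀ i ∈ s, 0 ≤ g i) (hfg : ∀ i ∈ s, g i = 0 → f i = 0) :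
    (∑ i ∈ s, f i) ^ 2 / ∑ i ∈ s, g i ≤ ∑ i ∈ s, f i ^ 2 / g i := by
  classical
  have pos_of_ne {i} (hi : i ∈ s) (h : g i ≠ 0) : 0 < g i := (hg i hi).lt_of_ne' h
  rw [← sum_filter_of_ne fun i hi hf => pos_of_ne hi (mt (hfg i hi) hf),
    ← sum_filter_of_ne fun i hi => pos_of_ne hi,
    ← sum_filter_of_ne fun i hi hfg => pos_of_ne hi fun h0 => by simp [h0] at hfg]
  exact sq_sum_div_le_sum_sq_div _ _ fun i hi => (mem_filter.1 hi).2

section Marginal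

variable {γ : Type*} [Fintype γ] [DecidableEq γ] {α : γ → Type*} [∀ i, Fintype (α i)]
  [∀ i, DecidableEq (α i)]

lemma sum_filter_apply_eq_prod_of_sum_eq_one {R : Type*} [CommSemiring R] (f : (i : γ) → α i → R)
    (hf : ∀ i, ∑ a, f i a = 1) (i : γ) (a : α i) :
    ∑ x : (i : γ) → α i with x i = a, ∏ j, f j (x j) = f i a := by
  have h := Fintype.piFinset_update_singleton_eq_filter_piFinset_eq
    (fun j => (Finset.univ : Finset (α j))) i (Finset.mem_univ a)
  rw [Fintype.piFinset_univ] at h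
  rw [← h, ← Finset.prod_univ_sum, Fintype.prod_eq_mul_prod_compl i, Function.update_self,
    Finset.sum_singleton, Finset.prod_eq_one, mul_one]
  intro j hj
  rw [Function.update_of_ne (by simpa using hj), hf]

end Marginal

end Finset

namespace Matrix

namespace PosSemidef

variable {𝕜 n : Type*} [RCLike 𝕜] [Fintype n] [DecidableEq n] {A : Matrix n n 𝕜}

lemma sqrt_mul_self (hA : A.PosSemidef) : hA.sqrt * hA.sqrt = A := by
  have hU : (star hA.1.eigenvectorUnitary : Matrix n n 𝕜) * hA.1.eigenvectorUnitary = 1 :=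
    Unitary.coe_star_mul_self _
  conv_rhs => rw [hA.1.spectral_theorem, Unitary.conjStarAlgAut_apply]
  simp only [sqrt, mul_assoc]
  rw [← mul_assoc _ (hA.1.eigenvectorUnitary : Matrix n n 𝕜), hU, one_mul,
    ← mul_assoc (diagonal _), diagonal_mul_diagonal]
  congr 3
  funext i
  simp [← RCLike.ofReal_mul, Real.mul_self_sqrt (hA.eigenvalues_nonneg i)]

lemma posSemidef_sqrt (hA : A.PosSemidef) : hA.sqrt.PosSemidef := by
  simpa [sqrt, star_eq_conjTranspose] using
    (PosSemidef.diagonal (d := ((↑) ∘ (√·) ∘ hA.1.eigenvalues : n → 𝕜))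
      fun i => by simp).mul_mul_conjTranspose_same (hA.1.eigenvectorUnitary : Matrix n n 𝕜)

lemma sqrt_mul_self_mul_sqrt (hA : A.PosSemidef) : hA.sqrt * A * hA.sqrt = A * A := by
  have h := hA.sqrt_mul_self
  generalize hA.sqrt = S at h ⊢
  subst h
  simp only [mul_assoc]

end PosSemidef

section VecMulVec

variable {n : Type*} [Fintype n]

lemma dotProduct_smul_vecMulVec_mulVec (c : ℝ) (b u : n → ℂ) :
    star u ⬝ᵥ ((c • vecMulVec b (star b)) *ᵥ u) = ((c * ‖star u ⬝ᵥ b‖ ^ 2 : ℝ) : ℂ) := by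
  rw [smul_mulVec, vecMulVec_mulVec, dotProduct_smul, dotProduct_smul,
    show star b ⬝ᵥ u = star (star u ⬝ᵥ b) from star_dotProduct _ _, op_smul_eq_mul,
    Complex.star_def, Complex.mul_conj', Complex.real_smul]
  push_cast
  rfl

-- Joint convexity of `(r, a) ↦ r⁻¹ • |a⟩⟨a|`.
lemma inv_smul_vecMulVec_sum_le {κ : Type*} (s : Finset κ) (r : κ → ℝ) (a : κ → n → ℂ)
    (hr : ∀ y ∈ s, 0 ≤ r y) (ha : ∀ y ∈ s, r y = 0 → a y = 0) :
    (∑ y ∈ s, r y)⁻¹ • vecMulVec (∑ y ∈ s, a y) (star (∑ y ∈ s, a y))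
      ≤ ∑ y ∈ s, (r y)⁻¹ • vecMulVec (a y) (star (a y)) := by
  have herm (c : ℝ) (b : n → ℂ) : (c • vecMulVec b (star b)).IsHermitian :=
    (posSemidef_vecMulVec_self_star b).isHermitian.smul (IsSelfAdjoint.all c)
  refine PosSemidef.of_dotProduct_mulVec_nonneg
    ((isSelfAdjoint_sum s fun y _ => herm _ _).sub (herm _ _)) fun u => ?_
  rw [sub_mulVec, dotProduct_sub, sum_mulVec, dotProduct_sum]
  simp only [dotProduct_smul_vecMulVec_mulVec]
  rw [← Complex.ofReal_sum, ← Complex.ofReal_sub, Complex.zero_le_real, sub_nonneg,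
    dotProduct_sum]
  calc (∑ y ∈ s, r y)⁻¹ * ‖∑ y ∈ s, star u ⬝ᵥ a y‖ ^ 2
      ≤ (∑ y ∈ s, ‖star u ⬝ᵥ a y‖) ^ 2 / ∑ y ∈ s, r y := by
        rw [inv_mul_eq_div]
        gcongr
        · exact Finset.sum_nonneg hr
        · exact norm_sum_le _ _
    _ ≤ ∑ y ∈ s, ‖star u ⬝ᵥ a y‖ ^ 2 / r y :=
        Finset.sq_sum_div_le_sum_sq_div_of_nonneg _ _ _ hr fun y hy h0 => by simp [ha y hy h0]
    _ = ∑ y ∈ s, (r y)⁻¹ * ‖star u ⬝ᵥ a y‖ ^ 2 := by simp only [div_eq_inv_mul]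

end VecMulVec

variable {n : Type*} [Fintype n] [DecidableEq n]

lemma PosSemidef.trace_mul_nonneg {P Q : Matrix n n ℂ} (hP : P.PosSemidef)
    (hQ : Q.PosSemidef) : 0 ≤ trace (P * Q) := by
  have hconj := hP.mul_mul_conjTranspose_same hQ.sqrt
  rw [hQ.posSemidef_sqrt.isHermitian.eq] at hconj
  rw [← hQ.sqrt_mul_self, ← mul_assoc, trace_mul_comm, ← mul_assoc]
  exact hconj.trace_nonneg

lemma PosSemidef.ofReal_re_trace_mul {P Q : Matrix n n ℂ} (hP : P.PosSemidef)
    (hQ : Q.PosSemidef) : ((trace (P * Q)).re : ℂ) = trace (P * Q) :=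
  (Complex.eq_re_of_ofReal_le (r := 0) (by simpa using hP.trace_mul_nonneg hQ)).symm

lemma re_trace_mul_le_of_le {M N Y : Matrix n n ℂ} (hMN : M ≤ N) (hY : Y.PosSemidef) :
    (trace (M * Y)).re ≤ (trace (N * Y)).re := by
  have h := (Complex.nonneg_iff.1 (PosSemidef.trace_mul_nonneg hMN hY)).1
  rw [sub_mul, trace_sub, Complex.sub_re] at h
  linarith

lemma PosSemidef.le_re_trace_smul_one {E : Matrix n n ℂ} (hE : E.PosSemidef) :
    E ≤ (trace E).re • (1 : Matrix n n ℂ) := by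
  rw [← Algebra.algebraMap_eq_smul_one]
  refine le_algebraMap_of_spectrum_le (fun x hx => ?_) hE.1
  obtain ⟨i, rfl⟩ := hE.1.spectrum_real_eq_range_eigenvalues ▸ hx
  rw [hE.1.trace_eq_sum_eigenvalues]
  simpa using Finset.single_le_sum (fun j _ => hE.eigenvalues_nonneg j) (Finset.mem_univ i)

lemma PosSemidef.mul_self_le_smul {E : Matrix n n ℂ} (hE : E.PosSemidef) {c : ℝ}
    (hEc : E ≤ c • (1 : Matrix n n ℂ)) : E * E ≤ c • E := by
  have h := conjugate_le_conjugate_of_nonneg hEc (nonneg_iff_posSemidef.2 hE.posSemidef_sqrt)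
  rwa [hE.sqrt_mul_self_mul_sqrt, mul_smul_comm, mul_one, smul_mul_assoc, hE.sqrt_mul_self] at h

lemma PosSemidef.sqrt_mul_eq_zero_of_trace_mul_eq_zero {P Q : Matrix n n ℂ} (hP : P.PosSemidef)
    (hQ : Q.PosSemidef) (h : trace (P * Q) = 0) : hP.sqrt * Q = 0 := by
  have hPQ : hP.sqrt * hQ.sqrt = 0 := by
    rw [← trace_mul_conjTranspose_self_eq_zero_iff, ← h]
    calc trace (hP.sqrt * hQ.sqrt * (hP.sqrt * hQ.sqrt)ᴴ)
        = trace (hP.sqrt * (hQ.sqrt * hQ.sqrt) * hP.sqrt) := by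
          rw [conjTranspose_mul, hP.posSemidef_sqrt.isHermitian.eq,
            hQ.posSemidef_sqrt.isHermitian.eq]
          simp only [mul_assoc]
      _ = trace (P * Q) := by
          rw [hQ.sqrt_mul_self, trace_mul_comm, ← mul_assoc, hP.sqrt_mul_self]
  rw [← hQ.sqrt_mul_self, ← mul_assoc, hPQ, zero_mul]

end Matrix

open Matrix

lemma trace_outerProd_self {ι : Type*} [Fintype ι] (M : Matrix ι ι ℂ) :
    trace (outerProd M M) = trace (M * Mᴴ) := by
  simp only [trace, diag, outerProd, of_apply, mul_apply, conjTranspose_apply,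
    Fintype.sum_prod_type]

section Fisher

variable {ι : Type*} [Fintype ι] [DecidableEq ι] {ρ : Matrix ι ι ℂ}

def fisherTerm (hρ : ρ.PosSemidef) (E : Matrix ι ι ℂ) : Matrix (ι × ι) (ι × ι) ℂ :=
  (trace (ρ * E))⁻¹ • outerProd (hρ.sqrt * E) (hρ.sqrt * E)

lemma fisherTerm_eq_smul_vecMulVec (hρ : ρ.PosSemidef) {E : Matrix ι ι ℂ} (hE : E.PosSemidef) :
    fisherTerm hρ E = (trace (ρ * E)).re⁻¹ •
      vecMulVec (vec (hρ.sqrt * E)ᵀ) (star (vec (hρ.sqrt * E)ᵀ)) := by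
  rw [fisherTerm, ← hρ.ofReal_re_trace_mul hE, ← Complex.ofReal_inv, Complex.coe_smul]
  rfl

lemma fisherTerm_sum_le (hρ : ρ.PosSemidef) {κ : Type*} (s : Finset κ) (E : κ → Matrix ι ι ℂ)
    (hE : ∀ y ∈ s, (E y).PosSemidef) :
    fisherTerm hρ (∑ y ∈ s, E y) ≤ ∑ y ∈ s, fisherTerm hρ (E y) := by
  rw [fisherTerm_eq_smul_vecMulVec hρ (posSemidef_sum s hE),
    Finset.sum_congr rfl fun y hy => fisherTerm_eq_smul_vecMulVec hρ (hE y hy),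
    Matrix.mul_sum, trace_sum, Complex.re_sum, Matrix.mul_sum, transpose_sum, vec_sum]
  refine inv_smul_vecMulVec_sum_le s _ _ (fun y hy => ?_) fun y hy h0 => ?_
  · exact (Complex.nonneg_iff.1 (hρ.trace_mul_nonneg (hE y hy))).1
  · rw [hρ.sqrt_mul_eq_zero_of_trace_mul_eq_zero (hE y hy)
      (by rw [← hρ.ofReal_re_trace_mul (hE y hy), h0, Complex.ofReal_zero])]
    simp

lemma re_trace_fisherTerm (hρ : ρ.PosSemidef) {E : Matrix ι ι ℂ} (hE : E.PosSemidef) :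
    (trace (fisherTerm hρ E)).re = (trace (ρ * (E * E))).re / (trace (ρ * E)).re := by
  have htr : trace (hρ.sqrt * E * (hρ.sqrt * E)ᴴ) = trace (ρ * (E * E)) := by
    rw [conjTranspose_mul, hE.isHermitian.eq, hρ.posSemidef_sqrt.isHermitian.eq, ← mul_assoc,
      trace_mul_comm, ← mul_assoc, ← mul_assoc, hρ.sqrt_mul_self, mul_assoc]
  have hEE : (E * E).PosSemidef := by
    simpa [hE.isHermitian.eq] using posSemidef_conjTranspose_mul_self E
  rw [fisherTerm, trace_smul, trace_outerProd_self, htr, smul_eq_mul,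
    ← hρ.ofReal_re_trace_mul hE, ← hρ.ofReal_re_trace_mul hEE, ← Complex.ofReal_inv,
    ← Complex.ofReal_mul]
  simp only [Complex.ofReal_re, div_eq_inv_mul]

lemma re_trace_fisherTerm_le (hρ : ρ.PosSemidef) {E : Matrix ι ι ℂ} (hE : E.PosSemidef)
    {c : ℝ} (hc : 0 ≤ c) (hEc : E ≤ c • (1 : Matrix ι ι ℂ)) :
    (trace (fisherTerm hρ E)).re ≤ c := by
  rw [re_trace_fisherTerm hρ hE]
  refine div_le_of_le_mul₀ (Complex.nonneg_iff.1 (hρ.trace_mul_nonneg hE)).1 hc ?_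
  have h := re_trace_mul_le_of_le (hE.mul_self_le_smul hEc) hρ
  rwa [trace_mul_comm, trace_mul_comm (c • E), Matrix.mul_smul, trace_smul, Complex.smul_re,
    smul_eq_mul] at h

end Fisher

section Measurement

variable {ι κ : Type*} [Fintype ι] [DecidableEq ι] [Fintype κ] {ρ : Matrix ι ι ℂ}

lemma IsMeasurement.le_one {C : κ → Matrix ι ι ℂ} (hC : IsMeasurement C) (y : κ) : C y ≤ 1 := by
  classical
  rw [← hC.2, ← Finset.add_sum_erase _ _ (Finset.mem_univ y)]
  exact le_add_of_nonneg_right (nonneg_iff_posSemidef.2 (posSemidef_sum _ fun z _ => hC.1 z))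

lemma fisherRho_eq_sum_fisherTerm (hρ : ρ.PosDef) (C : κ → Matrix ι ι ℂ) :
    FisherRho hρ C = ∑ y, fisherTerm hρ.posSemidef (C y) :=
  rfl

lemma fisherRho_le_of_eq_sum_fiber (hρ : ρ.PosDef) {κ' : Type*} [Fintype κ'] [DecidableEq κ']
    {A : κ' → Matrix ι ι ℂ} {C : κ → Matrix ι ι ℂ} (hC : ∀ y, (C y).PosSemidef) (f : κ → κ')
    (hA : ∀ x, A x = ∑ y with f y = x, C y) :
    FisherRho hρ A ≤ FisherRho hρ C := by
  simp only [fisherRho_eq_sum_fisherTerm, hA]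
  calc ∑ x, fisherTerm hρ.posSemidef (∑ y with f y = x, C y)
      ≤ ∑ x, ∑ y with f y = x, fisherTerm hρ.posSemidef (C y) :=
        Finset.sum_le_sum fun x _ => fisherTerm_sum_le _ _ _ fun y _ => hC y
    _ = ∑ y, fisherTerm hρ.posSemidef (C y) := Finset.sum_fiberwise _ _ _

lemma re_trace_fisherRho_le_min_card (hρ : ρ.PosDef) {C : κ → Matrix ι ι ℂ}
    (hC : IsMeasurement C) :
    (trace (FisherRho hρ C)).re ≤ min (Fintype.card ι : ℝ) (Fintype.card κ) := by
  rw [fisherRho_eq_sum_fisherTerm, trace_sum, Complex.re_sum]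
  refine le_min ?_ ?_
  · calc ∑ y, (trace (fisherTerm hρ.posSemidef (C y))).re
        ≤ ∑ y, (trace (C y)).re :=
          Finset.sum_le_sum fun y _ => re_trace_fisherTerm_le _ (hC.1 y)
            (Complex.nonneg_iff.1 (hC.1 y).trace_nonneg).1 (hC.1 y).le_re_trace_smul_one
      _ = Fintype.card ι := by
          rw [← Complex.re_sum, ← trace_sum, hC.2, trace_one, Complex.natCast_re]
  · calc ∑ y, (trace (fisherTerm hρ.posSemidef (C y))).re
        ≤ ∑ _y : κ, (1 : ℝ) :=
          Finset.sum_le_sum fun y _ => re_trace_fisherTerm_le _ (hC.1 y) zero_le_one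
            (by rw [one_smul]; exact hC.le_one y)
      _ = Fintype.card κ := by simp

end Measurement

section Joint

variable {γ : Type*} [Fintype γ] {α : γ → Type*} [∀ i, Fintype (α i)] {ι κ : Type*} [Fintype κ]

def jointMeasurement (μ : (i : γ) → α i → κ → ℝ) (C : κ → Matrix ι ι ℂ) :
    ((i : γ) → α i) → Matrix ι ι ℂ :=
  fun x => ∑ y, ((∏ i, μ i (x i) y : ℝ) : ℂ) • C y

variable {μ : (i : γ) → α i → κ → ℝ} {C : κ → Matrix ι ι ℂ}

lemma isMeasurement_jointMeasurement [DecidableEq γ] [Fintype ι] [DecidableEq ι]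
    (hμ0 : ∀ i a y, 0 ≤ μ i a y) (hμ1 : ∀ i y, ∑ a, μ i a y = 1) (hC : IsMeasurement C) :
    IsMeasurement (jointMeasurement μ C) := by
  refine ⟨fun x => posSemidef_sum _ fun y _ => (hC.1 y).smul ?_, ?_⟩
  · exact Complex.zero_le_real.2 (Finset.prod_nonneg fun i _ => hμ0 i (x i) y)
  · simp only [jointMeasurement]
    rw [Finset.sum_comm, ← hC.2]
    refine Finset.sum_congr rfl fun y _ => ?_
    rw [← Finset.sum_smul, ← Complex.ofReal_sum, ← Fintype.prod_sum fun i a => μ i a y]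
    simp [hμ1]

lemma sum_filter_jointMeasurement [DecidableEq γ] [∀ i, DecidableEq (α i)]
    (hμ1 : ∀ i y, ∑ a, μ i a y = 1) (i : γ) (a : α i) :
    ∑ x with x i = a, jointMeasurement μ C x = ∑ y, (μ i a y : ℂ) • C y := by
  simp only [jointMeasurement]
  rw [Finset.sum_comm]
  refine Finset.sum_congr rfl fun y _ => ?_
  rw [← Finset.sum_smul, ← Complex.ofReal_sum,
    Finset.sum_filter_apply_eq_prod_of_sum_eq_one (fun j b => μ j b y) (fun j => hμ1 j y)]

end Joint

theorem stmt18_general {d g : ℕ} (n : Fin g → ℕ)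
    (A : (i : Fin g) → Fin (n i) → Matrix (Fin d) (Fin d) ℂ)
    {ρ : Matrix (Fin d) (Fin d) ℂ} (hρ : ρ.PosDef)
    (Y : Fin g → Matrix (Fin d × Fin d) (Fin d × Fin d) ℂ) (hY : IsMeasurement Y)
    (h : ((min d (∏ i, n i) : ℕ) : ℝ) <
      ∑ i, (Matrix.trace (FisherRho hρ (A i) * Y i)).re) :
    ¬ ∃ (m : ℕ) (C : Fin m → Matrix (Fin d) (Fin d) ℂ),
      IsMeasurement C ∧ ∀ i, PostProc (A i) C := by
  rintro ⟨m, C, hC, hpost⟩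
  choose μ hμ0 hμ1 hμA using hpost
  have hJ := isMeasurement_jointMeasurement hμ0 hμ1 hC
  have hA_le (i : Fin g) : FisherRho hρ (A i) ≤ FisherRho hρ (jointMeasurement μ C) :=
    fisherRho_le_of_eq_sum_fiber hρ hJ.1 (· i) fun a => by
      rw [hμA, sum_filter_jointMeasurement hμ1]
  refine h.not_ge ?_
  calc ∑ i, (trace (FisherRho hρ (A i) * Y i)).re
      ≤ ∑ i, (trace (FisherRho hρ (jointMeasurement μ C) * Y i)).re :=
        Finset.sum_le_sum fun i _ => re_trace_mul_le_of_le (hA_le i) (hY.1 i)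
    _ = (trace (FisherRho hρ (jointMeasurement μ C))).re := by
        rw [← Complex.re_sum, ← trace_sum, ← Matrix.mul_sum, hY.2, mul_one]
    _ ≤ ((min d (∏ i, n i) : ℕ) : ℝ) := by
        simpa using re_trace_fisherRho_le_min_card hρ hJ

/-- The pretty-good-measurement form of the Fisher information incompatibility
criterion: any measurement gives a lower bound on the height. -/
theorem stmt18 {d g : ℕ} (n : Fin g → ℕ)
    (A : (i : Fin g) → Fin (n i) → Matrix (Fin d) (Fin d) ℂ)
    (hA : ∀ i, IsMeasurement (A i)) (hA0 : ∀ i x, A i x ≠ 0)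
    {ρ : Matrix (Fin d) (Fin d) ℂ} (hρ : ρ.PosDef) (hρtr : Matrix.trace ρ = 1)
    (Y : Fin g → Matrix (Fin d × Fin d) (Fin d × Fin d) ℂ) (hY : IsMeasurement Y)
    (h : ((min d (∏ i, n i) : ℕ) : ℝ) <
      ∑ i, (Matrix.trace (FisherRho hρ (A i) * Y i)).re) :
    ¬ ∃ (m : ℕ) (C : Fin m → Matrix (Fin d) (Fin d) ℂ),
      IsMeasurement C ∧ ∀ i, PostProc (A i) C :=
  stmt18_general n A hρ Y hY h
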